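/- For all integers m ≥ 1 and n ≥ 1, det D′_{m,n} = ∏_{h=1}^{m} ∏_{k=1}^{n} (4·cos²(hπ/(2m+1)) + 4·cos²((2k−1)π/(4n))). -/

import Mathlib

open Real

/-- The `n × n` matrix `A′_n`: all diagonal entries `4`, entry `-1` at every position
`(h,k)` with `|h-k| = 1` except at position `(n, n-1)` (the last row, next-to-last
column), where the entry is `-2`, and `0` elsewhere. -/
def matA' (n : ℕ) : Matrix (Fin n) (Fin n) ℝ :=
  Matrix.of fun h k =>
    if h = k then 4
    else if (h : ℕ) = n - 1 ∧ (k : ℕ) + 2 = n then -2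
    else if |(h : ℤ) - (k : ℤ)| = 1 then -1 else 0

/-- `B′_n` is `A′_n` with every diagonal entry `4` replaced by `3`. -/
def matB' (n : ℕ) : Matrix (Fin n) (Fin n) ℝ :=
  Matrix.of fun h k => if h = k then 3 else matA' n h k

/-- The `mn × mn` block-tridiagonal matrix `D′_{m,n}`: diagonal blocks `A′_n` except the
last one, which is `B′_n`; blocks immediately above and below the diagonal are `-I_n`;
all other blocks are zero.  (For `m = 1` this is just `B′_n`.) -/
def matD' (m n : ℕ) : Matrix (Fin m × Fin n) (Fin m × Fin n) ℝ :=
  Matrix.of fun p q =>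
    if p.1 = q.1 then
      (if (p.1 : ℕ) = m - 1 then matB' n else matA' n) p.2 q.2
    else if |(p.1 : ℤ) - (q.1 : ℤ)| = 1 then
      (-(1 : Matrix (Fin n) (Fin n) ℝ)) p.2 q.2
    else 0

/-!
`D′_{m,n}` is the Kronecker sum `M_m ⊗ I + I ⊗ A′_n`, where `M_m` is minus the adjacency matrix
of the path on `m` vertices with an extra `-1` in the last diagonal entry. Both summands are
diagonalised by sine vectors `(sin θ, sin 2θ, …)`: the recurrence
`sin ((i - 1) θ) + sin ((i + 1) θ) = 2 cos θ sin (i θ)` handles all rows but the last one, and the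
last row forces `θ = π - 2hπ/(2m+1)` for `M_m` and `φ = π - (2k-1)π/(2n)` for `A′_n`. The
eigenvalues `-2 cos θ_h` and `4 - 2 cos φ_k` are pairwise distinct, so the sine vectors form
invertible matrices `P` and `Q`, and `P ⊗ Q` diagonalises `D′_{m,n}` with eigenvalues
`-2 cos θ_h + 4 - 2 cos φ_k = 4 cos² (hπ/(2m+1)) + 4 cos² ((2k-1)π/(4n))`.
-/

open Finset Matrix SimpleGraph Function
open scoped Kronecker

namespace Matrix

variable {K ι κ : Type*} [Field K] [Fintype ι] [DecidableEq ι] [Fintype κ] [DecidableEq κ]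

theorem det_of_ne_zero_of_mulVec_eq_smul {A : Matrix ι ι K} {d : ι → K} {v : ι → ι → K}
    (hd : Injective d) (hv₀ : ∀ j, v j ≠ 0) (hv : ∀ j, A *ᵥ v j = d j • v j) :
    (of v).det ≠ 0 := by
  have hli : LinearIndependent K v :=
    Module.End.eigenvectors_linearIndependent' (toLin' A) d hd v fun j =>
      Module.End.hasEigenvector_iff.mpr
        ⟨Module.End.mem_eigenspace_iff.mpr (by simpa using hv j), hv₀ j⟩
  exact ((isUnit_iff_isUnit_det _).mp (linearIndependent_rows_iff_isUnit.mp hli)).ne_zero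

theorem mul_transpose_of_mulVec_eq_smul {A : Matrix ι ι K} {d : ι → K} {v : ι → ι → K}
    (hv : ∀ j, A *ᵥ v j = d j • v j) : A * (of v)ᵀ = (of v)ᵀ * diagonal d := by
  ext i j
  rw [mul_diagonal, mul_apply]
  simpa [mulVec, dotProduct, mul_comm] using congrFun (hv j) i

theorem kroneckerSum_mul_kronecker {R : Type*} [CommRing R] {A P : Matrix ι ι R}
    {B Q : Matrix κ κ R} {a : ι → R} {b : κ → R}
    (hA : A * P = P * diagonal a) (hB : B * Q = Q * diagonal b) :
    (A ⊗ₖ 1 + 1 ⊗ₖ B) * (P ⊗ₖ Q) = (P ⊗ₖ Q) * diagonal fun x => a x.1 + b x.2 := by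
  have hdiag : diagonal (fun x : ι × κ => a x.1 + b x.2) = diagonal a ⊗ₖ 1 + 1 ⊗ₖ diagonal b := by
    simp only [← diagonal_one, diagonal_kronecker_diagonal, diagonal_add, mul_one, one_mul]
  rw [hdiag, add_mul, mul_add, ← mul_kronecker_mul, ← mul_kronecker_mul, ← mul_kronecker_mul,
    ← mul_kronecker_mul, hA, hB, one_mul, mul_one, one_mul, mul_one]

theorem det_eq_prod_of_mul_eq_mul_diagonal {R : Type*} [CommRing R] [IsDomain R]
    {A P : Matrix ι ι R} {d : ι → R} (hP : P.det ≠ 0) (h : A * P = P * diagonal d) :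
    A.det = ∏ i, d i := by
  have h_det := congrArg det h
  rw [det_mul, det_mul, det_diagonal, mul_comm P.det] at h_det
  exact mul_right_cancel₀ hP h_det

theorem det_kroneckerSum_of_mulVec_eq_smul {A : Matrix ι ι K} {B : Matrix κ κ K}
    {a : ι → K} {b : κ → K} {u : ι → ι → K} {v : κ → κ → K}
    (ha : Injective a) (hu₀ : ∀ i, u i ≠ 0) (hu : ∀ i, A *ᵥ u i = a i • u i)
    (hb : Injective b) (hv₀ : ∀ j, v j ≠ 0) (hv : ∀ j, B *ᵥ v j = b j • v j) :
    (A ⊗ₖ 1 + 1 ⊗ₖ B).det = ∏ x : ι × κ, (a x.1 + b x.2) := by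
  refine det_eq_prod_of_mul_eq_mul_diagonal ?_ <| kroneckerSum_mul_kronecker
    (mul_transpose_of_mulVec_eq_smul hu) (mul_transpose_of_mulVec_eq_smul hv)
  rw [det_kronecker, det_transpose, det_transpose]
  exact mul_ne_zero (pow_ne_zero _ (det_of_ne_zero_of_mulVec_eq_smul ha hu₀ hu))
    (pow_ne_zero _ (det_of_ne_zero_of_mulVec_eq_smul hb hv₀ hv))

end Matrix

instance (n : ℕ) : DecidableRel (pathGraph n).Adj := fun _ _ => decidable_of_iff' _ pathGraph_adj

noncomputable def sinVec (n : ℕ) (θ : ℝ) : Fin n → ℝ := fun i => sin (((i : ℕ) + 1 : ℝ) * θ)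

theorem adjMatrix_pathGraph_mulVec_sinVec (n : ℕ) (θ : ℝ) (i : Fin n) :
    ((pathGraph n).adjMatrix ℝ *ᵥ sinVec n θ) i =
      2 * cos θ * sinVec n θ i - if (i : ℕ) + 1 = n then sin ((n + 1) * θ) else 0 := by
  obtain ⟨i, hi⟩ := i
  have hsplit : ∀ j : ℕ, (if i + 1 = j ∨ j + 1 = i then sin ((j + 1 : ℝ) * θ) else 0) =
      (if i + 1 = j then sin ((j + 1 : ℝ) * θ) else 0) +
        (if j + 1 = i then sin ((j + 1 : ℝ) * θ) else 0) := by
    intro j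
    split_ifs <;> first | omega | ring
  have hprev : ∑ j ∈ range n, (if j + 1 = i then sin ((j + 1 : ℝ) * θ) else 0) = sin (i * θ) := by
    cases i with
    | zero => simp
    | succ i => simp [sum_ite_eq', show i < n by omega]
  have hrec : 2 * cos θ * sin ((i + 1 : ℝ) * θ) = sin (i * θ) + sin ((i + 2 : ℝ) * θ) := by
    rw [show (i : ℝ) * θ = (i + 1) * θ - θ by ring, show (i + 2 : ℝ) * θ = (i + 1) * θ + θ by ring,
      sin_sub, sin_add]
    ring
  simp only [mulVec, dotProduct, adjMatrix_apply, pathGraph_adj, sinVec, ite_mul, one_mul,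
    zero_mul]
  rw [Fin.sum_univ_eq_sum_range
      (fun j => if i + 1 = j ∨ j + 1 = i then sin ((j + 1 : ℝ) * θ) else 0),
    sum_congr rfl fun j _ => hsplit j, sum_add_distrib, sum_ite_eq, hprev, hrec]
  split_ifs with h_mem h_last h_last <;> rw [mem_range] at h_mem
  · omega
  · rw [show ((i + 1 : ℕ) + 1 : ℝ) = i + 2 by push_cast; ring]; ring
  · rw [← h_last, show ((i + 1 : ℕ) + 1 : ℝ) = i + 2 by push_cast; ring]; ring
  · omega

noncomputable def matM (m : ℕ) : Matrix (Fin m) (Fin m) ℝ :=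
  -(pathGraph m).adjMatrix ℝ - diagonal fun i : Fin m => if (i : ℕ) + 1 = m then 1 else 0

theorem matM_mulVec_sinVec {m : ℕ} {θ : ℝ} (hθ : cos ((2 * m + 1) * θ / 2) = 0) :
    matM m *ᵥ sinVec m θ = (-2 * cos θ) • sinVec m θ := by
  have h_last : sin ((m + 1) * θ) = sin (m * θ) := by
    rw [← sub_eq_zero, sin_sub_sin, show ((m + 1) * θ + m * θ) / 2 = (2 * m + 1) * θ / 2 by ring,
      hθ, mul_zero]
  ext i
  simp only [matM, sub_mulVec, neg_mulVec, Pi.sub_apply, Pi.neg_apply, mulVec_diagonal,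
    adjMatrix_pathGraph_mulVec_sinVec, Pi.smul_apply, smul_eq_mul]
  split_ifs with h
  · rw [h_last, sinVec, show ((i : ℕ) + 1 : ℝ) = m by exact_mod_cast h]; ring
  · ring

def cornerA (n : ℕ) : Matrix (Fin n) (Fin n) ℝ :=
  of fun i j => if (i : ℕ) + 1 = n ∧ (j : ℕ) + 2 = n then 1 else 0

theorem matA'_eq_four_sub_adjMatrix_sub_cornerA (n : ℕ) :
    matA' n = (4 : ℝ) • 1 - (pathGraph n).adjMatrix ℝ - cornerA n := by
  ext i j
  have hi := i.isLt
  simp only [matA', cornerA, Matrix.sub_apply, Matrix.smul_apply, one_apply, of_apply,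
    adjMatrix_apply, pathGraph_adj, Fin.ext_iff, abs_eq (zero_le_one' ℤ)]
  split_ifs <;> first | omega | norm_num

theorem cornerA_mulVec_sinVec (n : ℕ) (φ : ℝ) (i : Fin n) :
    (cornerA n *ᵥ sinVec n φ) i = if (i : ℕ) + 1 = n then sin ((n - 1) * φ) else 0 := by
  simp only [cornerA, mulVec, dotProduct, of_apply, sinVec, ite_mul, one_mul, zero_mul, ite_and]
  split_ifs with hi
  · rw [Fin.sum_univ_eq_sum_range (fun j => if j + 2 = n then sin ((j + 1 : ℝ) * φ) else 0)]
    rcases (by omega : n = 1 ∨ 2 ≤ n) with rfl | hn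
    · simp
    · obtain ⟨k, rfl⟩ := Nat.exists_eq_add_of_le' hn
      simp only [Nat.add_right_cancel_iff, sum_ite_eq', mem_range, show k < k + 2 by omega,
        if_true]
      push_cast
      ring_nf
  · exact sum_const_zero

theorem matA'_mulVec_sinVec {n : ℕ} {φ : ℝ} (hφ : cos (n * φ) = 0) :
    matA' n *ᵥ sinVec n φ = (4 - 2 * cos φ) • sinVec n φ := by
  have h_last : sin ((n + 1) * φ) = sin ((n - 1) * φ) := by
    rw [← sub_eq_zero, sin_sub_sin, show ((n + 1) * φ + (n - 1) * φ) / 2 = n * φ by ring,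
      hφ, mul_zero]
  ext i
  simp only [matA'_eq_four_sub_adjMatrix_sub_cornerA, sub_mulVec, smul_mulVec, one_mulVec,
    Pi.sub_apply, Pi.smul_apply, adjMatrix_pathGraph_mulVec_sinVec, cornerA_mulVec_sinVec,
    smul_eq_mul]
  split_ifs
  · rw [h_last]; ring
  · ring

theorem matB'_eq_sub_one (n : ℕ) : matB' n = matA' n - 1 := by
  ext i j
  rcases eq_or_ne i j with rfl | h
  · norm_num [matB', matA']
  · simp [matB', matA', h]

theorem matD'_eq_kroneckerSum (m n : ℕ) : matD' m n = matM m ⊗ₖ 1 + 1 ⊗ₖ matA' n := by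
  ext ⟨i, j⟩ ⟨i', j'⟩
  have hi := i.isLt
  simp only [matD', matM, matB'_eq_sub_one, of_apply, Matrix.add_apply, kronecker_apply,
    Matrix.sub_apply, Matrix.neg_apply, adjMatrix_apply, pathGraph_adj, diagonal_apply,
    Matrix.one_apply, Fin.ext_iff, abs_eq (zero_le_one' ℤ)]
  split_ifs <;> first | omega | simp [Matrix.one_apply, Fin.ext_iff, sub_eq_neg_add, *]

theorem prod_Icc_one_eq_prod_fin {M : Type*} [CommMonoid M] (f : ℕ → M) (m : ℕ) :
    ∏ h ∈ Icc 1 m, f h = ∏ h : Fin m, f ((h : ℕ) + 1) := by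
  rw [Fin.prod_univ_eq_prod_range (fun i => f (i + 1)), range_eq_Ico, prod_Ico_add', zero_add,
    Ico_add_one_right_eq_Icc]

theorem sinVec_ne_zero {n : ℕ} (hn : 0 < n) {θ : ℝ} (hθ : θ ∈ Set.Ioo 0 π) : sinVec n θ ≠ 0 := by
  intro h
  have h₀ := congrFun h ⟨0, hn⟩
  simp only [sinVec, CharP.cast_eq_zero, zero_add, one_mul, Pi.zero_apply] at h₀
  exact (sin_pos_of_pos_of_lt_pi hθ.1 hθ.2).ne' h₀

theorem pi_sub_two_mul_mem_Ioo {x : ℝ} (hx : x ∈ Set.Ioo 0 (π / 2)) :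
    π - 2 * x ∈ Set.Ioo 0 π := by
  constructor <;> linarith [hx.1, hx.2]

theorem injective_cos_pi_sub_two_mul {ι : Type*} {x : ι → ℝ} (hx : Injective x)
    (hmem : ∀ i, x i ∈ Set.Ioo 0 (π / 2)) : Injective fun i => cos (π - 2 * x i) := by
  intro i j h
  have hIcc : ∀ i, π - 2 * x i ∈ Set.Icc 0 π :=
    fun i => Set.Ioo_subset_Icc_self (pi_sub_two_mul_mem_Ioo (hmem i))
  exact hx (by linarith [injOn_cos (hIcc i) (hIcc j) h])

noncomputable def angleM (m : ℕ) (h : Fin m) : ℝ := (((h : ℕ) + 1 : ℕ) : ℝ) * π / (2 * m + 1)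

noncomputable def angleA (n : ℕ) (k : Fin n) : ℝ :=
  (2 * (((k : ℕ) + 1 : ℕ) : ℝ) - 1) * π / (4 * n)

theorem angleM_mem_Ioo (m : ℕ) (h : Fin m) : angleM m h ∈ Set.Ioo 0 (π / 2) := by
  have hh : ((h : ℕ) : ℝ) + 1 ≤ m := by exact_mod_cast h.isLt
  unfold angleM
  push_cast
  constructor
  · positivity
  · rw [div_lt_iff₀ (by positivity)]
    nlinarith [pi_pos]

theorem angleA_mem_Ioo (n : ℕ) (k : Fin n) : angleA n k ∈ Set.Ioo 0 (π / 2) := by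
  have hk : ((k : ℕ) : ℝ) + 1 ≤ n := by exact_mod_cast k.isLt
  have hk₀ : (0 : ℝ) ≤ (k : ℕ) := Nat.cast_nonneg _
  unfold angleA
  push_cast
  constructor
  · exact div_pos (mul_pos (by linarith) pi_pos) (by linarith)
  · rw [div_lt_iff₀ (by linarith)]
    nlinarith [pi_pos]

theorem angleM_injective (m : ℕ) : Injective (angleM m) := by
  intro h h' e
  have hne : (2 * m + 1 : ℝ) ≠ 0 := by positivity
  have e' := mul_right_cancel₀ pi_ne_zero ((div_left_inj' hne).mp e)
  push_cast at e'
  exact Fin.ext (by exact_mod_cast (by linarith : ((h : ℕ) : ℝ) = h'))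

theorem angleA_injective (n : ℕ) : Injective (angleA n) := by
  intro k k' e
  have hne : (4 * n : ℝ) ≠ 0 := by have hn := k.pos; positivity
  have e' := mul_right_cancel₀ pi_ne_zero ((div_left_inj' hne).mp e)
  push_cast at e'
  exact Fin.ext (by exact_mod_cast (by linarith : ((k : ℕ) : ℝ) = k'))

theorem cos_mul_pi_sub_two_mul_angleM (m : ℕ) (h : Fin m) :
    cos ((2 * m + 1) * (π - 2 * angleM m h) / 2) = 0 := by
  rw [cos_eq_zero_iff]
  refine ⟨m - ((h : ℕ) + 1 : ℕ), ?_⟩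
  unfold angleM
  field_simp
  push_cast
  ring

theorem cos_mul_pi_sub_two_mul_angleA (n : ℕ) (k : Fin n) :
    cos (n * (π - 2 * angleA n k)) = 0 := by
  rw [cos_eq_zero_iff]
  refine ⟨n - ((k : ℕ) + 1 : ℕ), ?_⟩
  have hn : (n : ℝ) ≠ 0 := by exact_mod_cast k.pos.ne'
  unfold angleA
  field_simp
  push_cast
  ring

theorem det_matD'_eq_double_product_general (m n : ℕ) :
    (matD' m n).det =
      ∏ h ∈ Finset.Icc 1 m, ∏ k ∈ Finset.Icc 1 n,
        (4 * Real.cos (h * π / (2 * m + 1)) ^ 2 +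
         4 * Real.cos ((2 * k - 1) * π / (4 * n)) ^ 2) := by
  have h_eigenvalue_add : ∀ x y : ℝ,
      -2 * cos (π - 2 * x) + (4 - 2 * cos (π - 2 * y)) = 4 * cos x ^ 2 + 4 * cos y ^ 2 := by
    intro x y
    rw [cos_pi_sub, cos_pi_sub, cos_two_mul, cos_two_mul]
    ring
  rw [matD'_eq_kroneckerSum, det_kroneckerSum_of_mulVec_eq_smul
    ((mul_right_injective₀ (by norm_num)).comp
      (injective_cos_pi_sub_two_mul (angleM_injective m) (angleM_mem_Ioo m)))
    (fun h => sinVec_ne_zero h.pos (pi_sub_two_mul_mem_Ioo (angleM_mem_Ioo m h)))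
    (fun h => matM_mulVec_sinVec (cos_mul_pi_sub_two_mul_angleM m h))
    ((sub_right_injective.comp (mul_right_injective₀ two_ne_zero)).comp
      (injective_cos_pi_sub_two_mul (angleA_injective n) (angleA_mem_Ioo n)))
    (fun k => sinVec_ne_zero k.pos (pi_sub_two_mul_mem_Ioo (angleA_mem_Ioo n k)))
    (fun k => matA'_mulVec_sinVec (cos_mul_pi_sub_two_mul_angleA n k))]
  simp only [Fintype.prod_prod_type, prod_Icc_one_eq_prod_fin, Function.comp_apply,
    h_eigenvalue_add, angleM, angleA]

theorem det_matD'_eq_double_product (m n : ℕ) (hm : 1 ≤ m) (hn : 1 ≤ n) :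
    (matD' m n).det =
      ∏ h ∈ Finset.Icc 1 m, ∏ k ∈ Finset.Icc 1 n,
        (4 * Real.cos (h * π / (2 * m + 1)) ^ 2 +
         4 * Real.cos ((2 * k - 1) * π / (4 * n)) ^ 2) :=
  det_matD'_eq_double_product_general m n
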